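/- Let H be a proper minor-closed graph class, let G be a graph, let k ≥ 1, and let X ⊆ V(G) be a 2k-H-linked set. For each S ⊆ V(G) with |S| ≤ k, let J_S denote the (necessarily unique) connected component of G−S with J_S ∉ H and |V(J_S) ∩ X| > (2/3)|X|. Then the collection B_X := {J_S : S ⊆ V(G), |S| ≤ k} is a strict H-bramble in G of order at least k. In particular, if G contains a 2k-H-linked set then H-sbn(G) ≥ k. (Content of Lemma 11.4) -/

import Mathlib

open SimpleGraph

set_option autoImplicit false

/-- `H` is a minor of `G`: the standard branch-set (minor model) definition. -/
def SimpleGraph.IsMinorOf {W V : Type} (H : SimpleGraph W) (G : SimpleGraph V) : Prop :=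
  ∃ φ : W → Set V,
    (∀ w, (φ w).Nonempty) ∧
    (∀ w, (G.induce (φ w)).Connected) ∧
    (∀ w₁ w₂, w₁ ≠ w₂ → Disjoint (φ w₁) (φ w₂)) ∧
    (∀ w₁ w₂, H.Adj w₁ w₂ → ∃ v₁ ∈ φ w₁, ∃ v₂ ∈ φ w₂, G.Adj v₁ v₂)
/-- A graph class: a (property of) simple graphs over all finite vertex types.
Closure under isomorphism is subsumed by minor-closedness below, since isomorphic
graphs are minors of each other. -/
abbrev GraphClass : Type 1 := ∀ (V : Type) [Finite V], SimpleGraph V → Prop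

/-- The class `C` is minor-closed. -/
def MinorClosed (C : GraphClass) : Prop :=
  ∀ (V W : Type) [Finite V] [Finite W] (G : SimpleGraph V) (H : SimpleGraph W),
    H.IsMinorOf G → C V G → C W H

/-- The class `C` is proper: it does not contain all graphs. -/
def ProperClass (C : GraphClass) : Prop :=
  ∃ (V : Type) (_ : Finite V) (G : SimpleGraph V), ¬ C V G

/-- The class `C` is nonempty. -/
def NonemptyClass (C : GraphClass) : Prop :=
  ∃ (V : Type) (_ : Finite V) (G : SimpleGraph V), C V G
/-- `K` is the vertex set of a connected component of `G - S`. -/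
def IsCompOf {V : Type} (G : SimpleGraph V) (S K : Set V) : Prop :=
  ∃ D : (G.induce Sᶜ).ConnectedComponent, K = Subtype.val '' D.supp
/-- A strict `C`-bramble in `G`: a collection of connected subgraphs of `G`, any two of
which share a vertex, none of which belongs to `C`. -/
def IsStrictBramble (C : GraphClass) {V : Type} [Finite V] (G : SimpleGraph V)
    (B : Set G.Subgraph) : Prop :=
  (∀ b ∈ B, b.Connected) ∧
  (∀ b₁ ∈ B, ∀ b₂ ∈ B, (b₁.verts ∩ b₂.verts).Nonempty) ∧
  ∀ b ∈ B, ¬ C ↥(b.verts) b.coe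
/-- `X` is `k`-`C`-linked in `G`: for every `S` of size at most `k` there is a
connected component of `G - S` which is not in `C` and contains more than two thirds
of `X`. -/
def HLinked (C : GraphClass) {V : Type} [Finite V] (G : SimpleGraph V) (k : ℕ)
    (X : Set V) : Prop :=
  ∀ S : Set V, S.ncard ≤ k →
    ∃ K : Set V, IsCompOf G S K ∧ ¬ C ↥K (G.induce K) ∧ 2 * X.ncard < 3 * (K ∩ X).ncard
/-- The subgraph of `G` induced on the vertex set `K`. -/
def inducedSG {V : Type} (G : SimpleGraph V) (K : Set V) : G.Subgraph where
  verts := K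
  Adj u v := u ∈ K ∧ v ∈ K ∧ G.Adj u v
  adj_sub h := h.2.2
  edge_vert h := h.1
  symm := by
    refine ⟨?_⟩
    intro u v h
    exact ⟨h.2.1, h.1, h.2.2.symm⟩

/-- The collection `B_X = {J_S : S ⊆ V(G), |S| ≤ k}`, where `J_S` is the (necessarily
unique) connected component of `G - S` which is not in `C` and contains more than two
thirds of `X`. -/
def linkedBramble (C : GraphClass) {V : Type} [Finite V] (G : SimpleGraph V)
    (k : ℕ) (X : Set V) : Set G.Subgraph :=
  {b | ∃ S K : Set V, S.ncard ≤ k ∧ IsCompOf G S K ∧ ¬ C ↥K (G.induce K) ∧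
    2 * X.ncard < 3 * (K ∩ X).ncard ∧ b = inducedSG G K}

private lemma reach_aux {V : Type} {G : SimpleGraph V} {s K : Set V}
    {a b : ↥s} (p : (G.induce s).Walk a b) (hp : ∀ v ∈ p.support, (v : V) ∈ K) :
    (G.induce K).Reachable ⟨a, hp a p.start_mem_support⟩ ⟨b, hp b p.end_mem_support⟩ := by
  induction p with
  | nil => rfl
  | cons h q ih =>
    rename_i u c w
    have hc : (c : V) ∈ K := hp c (by simp)
    have hq : ∀ v ∈ q.support, (v : V) ∈ K := fun v hv => hp v (by simp [hv])
    have hadj : (G.induce K).Adj ⟨u, hp u (by simp)⟩ ⟨c, hc⟩ := h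
    exact (hadj.reachable).trans (ih hq)

private lemma comp_induce_connected {V : Type} (G : SimpleGraph V) (S : Set V)
    (D : (G.induce Sᶜ).ConnectedComponent) :
    (G.induce (Subtype.val '' D.supp)).Connected := by
  classical
  set K := Subtype.val '' D.supp with hK
  obtain ⟨a, ha⟩ := D.exists_rep
  rw [connected_iff]
  refine ⟨?_, ⟨⟨a, ⟨a, ha, rfl⟩⟩⟩⟩
  rintro ⟨x, hx⟩ ⟨y, hy⟩
  obtain ⟨x', hx', rfl⟩ := hx
  obtain ⟨y', hy', rfl⟩ := hy
  rw [ConnectedComponent.mem_supp_iff] at hx' hy'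
  have hre : (G.induce Sᶜ).Reachable x' y' := ConnectedComponent.eq.mp (hx'.trans hy'.symm)
  obtain ⟨p⟩ := hre
  have hp : ∀ v ∈ p.support, (v : V) ∈ K := by
    intro v hv
    obtain ⟨q, r, rfl⟩ := SimpleGraph.Walk.mem_support_iff_exists_append.mp hv
    refine ⟨v, ?_, rfl⟩
    rw [ConnectedComponent.mem_supp_iff, ← hx']
    exact ConnectedComponent.eq.mpr q.reachable.symm
  exact reach_aux p hp

private lemma big_inter {V : Type} [Finite V] {X A B : Set V}
    (hA : A ⊆ X) (hB : B ⊆ X) (h1 : 2 * X.ncard < 3 * A.ncard)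
    (h2 : 2 * X.ncard < 3 * B.ncard) : (A ∩ B).Nonempty := by
  rw [Set.nonempty_iff_ne_empty]
  intro hcon
  have hu : (A ∪ B).ncard ≤ X.ncard :=
    Set.ncard_le_ncard (Set.union_subset hA hB) (Set.toFinite X)
  have hd : (A ∪ B).ncard = A.ncard + B.ncard := by
    rw [Set.ncard_union_eq (Set.disjoint_iff_inter_eq_empty.mpr hcon)
      (Set.toFinite A) (Set.toFinite B)]
  omega


/-- **Content of Lemma 11.4.** If `X` is a `2k`-`C`-linked set in `G`, then the
collection `B_X = {J_S : |S| ≤ k}` is a strict `C`-bramble in `G` of order at least `k`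
(every hitting set has size at least `k`); in particular `C`-sbn(G) ≥ k. -/
theorem linked_gives_strict_bramble (C : GraphClass)
    (hmc : MinorClosed C) (hproper : ProperClass C)
    {V : Type} [Finite V] (G : SimpleGraph V) (k : ℕ) (hk : 1 ≤ k)
    (X : Set V) (hX : HLinked C G (2 * k) X) :
    IsStrictBramble C G (linkedBramble C G k X) ∧
      ∀ S : Set V, (∀ b ∈ linkedBramble C G k X, (S ∩ b.verts).Nonempty) → k ≤ S.ncard := by
  classical
  have coe_eq : ∀ K : Set V, (inducedSG G K).coe = G.induce K := by
    intro K
    ext u v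
    exact ⟨fun h => h.2.2, fun h => ⟨u.2, v.2, h⟩⟩
  refine ⟨⟨?_, ?_, ?_⟩, ?_⟩
  · rintro b ⟨S, K, hS, ⟨D, rfl⟩, hC, hX3, rfl⟩
    rw [Subgraph.connected_iff', coe_eq]
    exact comp_induce_connected G S D
  · rintro b₁ ⟨S₁, K₁, hS₁, hc₁, hC₁, h₁, rfl⟩ b₂ ⟨S₂, K₂, hS₂, hc₂, hC₂, h₂, rfl⟩
    obtain ⟨x, hx1, hx2⟩ := big_inter (X := X) (Set.inter_subset_right) (Set.inter_subset_right) h₁ h₂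
    exact ⟨x, hx1.1, hx2.1⟩
  · rintro b ⟨S, K, hS, hc, hC, h3, rfl⟩
    show ¬ C ↥K (inducedSG G K).coe
    rw [coe_eq]
    exact hC
  · intro S hhit
    by_contra hlt
    push_neg at hlt
    obtain ⟨K, hc, hC, h3⟩ := hX S (by omega)
    have hb : inducedSG G K ∈ linkedBramble C G k X := ⟨S, K, by omega, hc, hC, h3, rfl⟩
    obtain ⟨x, hxS, hxK⟩ := hhit _ hb
    obtain ⟨D, rfl⟩ := hc
    obtain ⟨⟨x', hx'⟩, _, rfl⟩ := hxK
    exact hx' hxS
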